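/- arXiv:1210.7615 — 3 statements merged into one kernel-verified Lean document; each statement's English description precedes it below -/
import Mathlib

section
/- Let p be a prime and (K,v) a p-henselian valued field. Let f ∈ K[X] be a monic separable polynomial of degree greater than 1 which splits in K(p). If for every γ in the value group vK there exists x ∈ K with v(f(x)) > γ, then f has a zero in K. -/
noncomputable section

open Polynomial

/-- The maximal `p`-extension `K(p)`: the compositum, inside a fixed separable
(here algebraic) closure, of all finite Galois extensions of `K` of `p`-power degree. -/
def MaxPExt (p : ℕ) (K : Type*) [Field K] : IntermediateField K (AlgebraicClosure K) :=
  ⨆ L : {L : IntermediateField K (AlgebraicClosure K) //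
      FiniteDimensional K L ∧ IsGalois K L ∧ ∃ n : ℕ, Module.finrank K L = p ^ n}, L.1

/-- A valuation on `K` is `p`-henselian if it extends uniquely to `K(p)`. -/
def IsPHenselianV {K : Type*} [Field K] (p : ℕ) (O : ValuationSubring K) : Prop :=
  ∃! O' : ValuationSubring (MaxPExt p K),
    O'.comap (algebraMap K (MaxPExt p K)) = O

section Aux

variable {A B : Type*} [Field A] [Field B]

/-- Comparisons of valuations are preserved along a ring hom whose comap identifies the
valuation subrings. -/
theorem valSubring_le_iff_of_comap (ψ : A →+* B) {OA : ValuationSubring A}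
    {OB : ValuationSubring B} (h : OB.comap ψ = OA) (a b : A) :
    OA.valuation a ≤ OA.valuation b ↔ OB.valuation (ψ a) ≤ OB.valuation (ψ b) := by
  rw [ValuationSubring.valuation_le_iff, ValuationSubring.valuation_le_iff]
  constructor
  · rintro ⟨c, hc⟩
    refine ⟨⟨ψ c, ?_⟩, ?_⟩
    · have hmem : (c : A) ∈ OB.comap ψ := h.symm ▸ c.2
      exact ValuationSubring.mem_comap.mp hmem
    · rw [← hc, map_mul]
  · rintro ⟨d, hd⟩
    by_cases hb : b = 0
    · have ha : a = 0 := by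
        apply ψ.injective
        rw [map_zero, ← hd, hb, map_zero, mul_zero]
      exact ⟨0, by simp [ha, hb]⟩
    · have hψb : ψ b ≠ 0 := fun hc => hb (ψ.injective (by rw [hc, map_zero]))
      have hmem : ψ (a / b) ∈ OB := by
        have : ψ a / ψ b = (d : B) := by rw [div_eq_iff hψb]; exact hd.symm
        rw [map_div₀, this]
        exact d.2
      refine ⟨⟨a / b, ?_⟩, div_mul_cancel₀ a hb⟩
      rw [← h]
      exact ValuationSubring.mem_comap.mpr hmem

theorem valSubring_lt_iff_of_comap (ψ : A →+* B) {OA : ValuationSubring A}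
    {OB : ValuationSubring B} (h : OB.comap ψ = OA) (a b : A) :
    OA.valuation a < OA.valuation b ↔ OB.valuation (ψ a) < OB.valuation (ψ b) := by
  simp only [lt_iff_le_not_ge, valSubring_le_iff_of_comap ψ h a b,
    valSubring_le_iff_of_comap ψ h b a]

/-- The Krasner-style core argument: over a normal extension `L/K` carrying a valuation
subring `O'` lying over `O` which is invariant under all `K`-automorphisms of `L`,
a monic separable polynomial of degree `> 1` which splits in `L` and takes arbitrarily
small nonzero values has a root in `K`. -/
theorem krasner_core {K L : Type*} [Field K] [Field L] [Algebra K L] [hnorm : Normal K L]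
    (O : ValuationSubring K) (O' : ValuationSubring L)
    (hO'c : O'.comap (algebraMap K L) = O)
    (hσO : ∀ σ : L ≃ₐ[K] L, O'.comap (σ : L →+* L) = O')
    (f : Polynomial K) (hmonic : f.Monic) (hsep : f.Separable)
    (hdeg : 1 < f.natDegree)
    (hsplits : Splits (f.map (algebraMap K L)))
    (happrox : ∀ γ : O.ValueGroup, γ ≠ 0 → ∃ x : K, O.valuation (f.eval x) < γ) :
    ∃ x : K, f.eval x = 0 := by
  classical
  let φ : K →+* L := algebraMap K L
  let w := O'.valuation
  have hσlt : ∀ (σ : L ≃ₐ[K] L) (a b : L), w (σ a) < w (σ b) ↔ w a < w b :=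
    fun σ a b => (valSubring_lt_iff_of_comap (σ : L →+* L) (hσO σ) a b).symm
  have hKlt : ∀ a b : K, O.valuation a < O.valuation b ↔ w (φ a) < w (φ b) :=
    fun a b => valSubring_lt_iff_of_comap φ hO'c a b
  -- polynomial setup
  set F := f.map φ with hFdef
  have hFmonic : F.Monic := hmonic.map φ
  have hF0 : F ≠ 0 := hFmonic.ne_zero
  have hFsplits : Splits F := hsplits
  have hFsep : F.Separable := hsep.map
  have hFdeg : F.natDegree = f.natDegree := hmonic.natDegree_map φ
  set n := f.natDegree with hndef
  set R := F.roots with hRdef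
  have hcard : Multiset.card R = n := by
    rw [hRdef, splits_iff_card_roots.mp hFsplits]
    exact hFdeg
  have hnodup : R.Nodup := nodup_roots hFsep
  have hFeval : ∀ t : L, aeval t f = F.eval t := by
    intro t
    rw [aeval_def, ← eval_map]
  have hFprod : ∀ t : L, F.eval t = (R.map (fun a => t - a)).prod := by
    intro t
    conv_lhs => rw [hFsplits.eq_prod_roots_of_monic hFmonic]
    rw [eval_multiset_prod, Multiset.map_map]
    simp
    rfl
  -- distinct roots
  set S := R.toFinset with hSdef
  have hScard : S.card = n := by rw [hSdef, Multiset.toFinset_card_of_nodup hnodup, hcard]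
  set P := (S ×ˢ S).filter (fun q => q.1 ≠ q.2) with hPdef
  have hPne : P.Nonempty := by
    have h2 : 1 < S.card := by omega
    obtain ⟨a, ha, b, hb, hab⟩ := Finset.one_lt_card.mp h2
    exact ⟨(a, b), by simp [hPdef, Finset.mem_filter, Finset.mem_product, ha, hb, hab]⟩
  set Δ := P.inf' hPne (fun q => w (q.1 - q.2)) with hΔdef
  have hΔle : ∀ q ∈ P, Δ ≤ w (q.1 - q.2) := fun q hq => Finset.inf'_le _ hq
  -- cofinality of `vK` in `vL`, upward
  have hcofup : ∀ z : L, z ≠ 0 → ∃ e : K, e ≠ 0 ∧ w z ≤ w (φ e) := by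
    intro z hz
    by_cases h1 : w z ≤ 1
    · exact ⟨1, one_ne_zero, by rw [map_one, map_one]; exact h1⟩
    push_neg at h1
    by_contra hcon
    push_neg at hcon
    have hint : IsIntegral K z := Algebra.IsIntegral.isIntegral z
    set g := minpoly K z with hgdef
    have hgmonic : g.Monic := minpoly.monic hint
    set m := g.natDegree with hmdef
    have hm1 : 1 ≤ m := minpoly.natDegree_pos hint
    have heval : (0 : L) = ∑ i ∈ Finset.range (m + 1), φ (g.coeff i) * z ^ i := by
      have h0 := minpoly.aeval K z
      rw [aeval_eq_sum_range] at h0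
      rw [← h0]
      simp [Algebra.smul_def, φ]
      rfl
    have hzm : z ^ m = -(∑ i ∈ Finset.range m, φ (g.coeff i) * z ^ i) := by
      rw [Finset.sum_range_succ] at heval
      have hc : g.coeff m = 1 := hgmonic.coeff_natDegree
      rw [hc, map_one, one_mul] at heval
      linear_combination -heval
    have hwz : w z ≠ 0 := w.ne_zero_iff.mpr hz
    have hlt : w (∑ i ∈ Finset.range m, φ (g.coeff i) * z ^ i) < w (z ^ m) := by
      apply Valuation.map_sum_lt
      · exact w.ne_zero_iff.mpr (pow_ne_zero _ hz)
      · intro i hi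
        rw [Finset.mem_range] at hi
        by_cases hci : g.coeff i = 0
        · rw [hci, map_zero, zero_mul, map_zero, zero_lt_iff]
          exact w.ne_zero_iff.mpr (pow_ne_zero _ hz)
        · have h1' : w (φ (g.coeff i)) < w z := hcon (g.coeff i) hci
          calc w (φ (g.coeff i) * z ^ i) = w (φ (g.coeff i)) * w z ^ i := by
                rw [w.map_mul, w.map_pow]
            _ < w z * w z ^ i :=
                mul_lt_mul_of_pos_right h1' (zero_lt_iff.mpr (pow_ne_zero _ hwz))
            _ = w z ^ (i + 1) := (pow_succ' (w z) i).symm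
            _ ≤ w z ^ m := pow_le_pow_right₀ h1.le hi
            _ = w (z ^ m) := (w.map_pow z m).symm
    rw [hzm, w.map_neg] at hlt
    exact lt_irrefl _ hlt
  -- cofinality downward
  have hcof : ∀ z : L, z ≠ 0 → ∃ e : K, e ≠ 0 ∧ w (φ e) ≤ w z := by
    intro z hz
    obtain ⟨e, he, hle⟩ := hcofup z⁻¹ (inv_ne_zero hz)
    refine ⟨e⁻¹, inv_ne_zero he, ?_⟩
    rw [map_inv₀, w.map_inv, ← inv_inv (w z), ← w.map_inv]
    have hz' : (0 : O'.ValueGroup) < w z⁻¹ := zero_lt_iff.mpr (w.ne_zero_iff.mpr (inv_ne_zero hz))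
    have he' : (0 : O'.ValueGroup) < w (φ e) :=
      zero_lt_iff.mpr (w.ne_zero_iff.mpr (fun hc => he (φ.injective (by rw [hc, map_zero]))))
    exact (inv_le_inv₀ he' hz').mpr hle
  -- find `e₀ : K` with `w (φ e₀) ≤ Δ`
  obtain ⟨q₀, hq₀mem, hq₀⟩ := Finset.exists_mem_eq_inf' hPne (fun q => w (q.1 - q.2))
  have hq₀ne : q₀.1 - q₀.2 ≠ 0 := by
    rw [hPdef, Finset.mem_filter] at hq₀mem
    exact sub_ne_zero.mpr hq₀mem.2
  obtain ⟨e₀, he₀, hΔe⟩ := hcof (q₀.1 - q₀.2) hq₀ne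
  rw [← hq₀] at hΔe
  -- apply the approximation hypothesis
  have hγ : O.valuation (e₀ ^ n) ≠ 0 :=
    (Valuation.ne_zero_iff _).mpr (pow_ne_zero _ he₀)
  obtain ⟨x, hx⟩ := happrox (O.valuation (e₀ ^ n)) hγ
  have hφeval : ∀ y : K, φ (f.eval y) = F.eval (φ y) := by
    intro y
    rw [← hFeval, aeval_def, eval₂_at_apply]
  have hxw : w (φ (f.eval x)) < Δ ^ n := by
    calc w (φ (f.eval x)) < w (φ (e₀ ^ n)) := (hKlt _ _).mp hx
      _ = w (φ e₀) ^ n := by rw [map_pow, w.map_pow]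
      _ ≤ Δ ^ n := pow_le_pow_left₀ zero_le' hΔe n
  -- there is a root `α` close to `φ x`
  have hprodlt : (R.map (fun a => w (φ x - a))).prod < Δ ^ n := by
    have hmap : w (F.eval (φ x)) = (R.map (fun a => w (φ x - a))).prod := by
      rw [hFprod, map_multiset_prod, Multiset.map_map]
      rfl
    rw [← hmap, ← hφeval x]
    exact hxw
  have hexα : ∃ a ∈ R, w (φ x - a) < Δ := by
    by_contra hcon
    push_neg at hcon
    have hle : Δ ^ n ≤ (R.map (fun a => w (φ x - a))).prod := by
      have h1 : Δ ^ n = (R.map (fun _ => Δ)).prod := by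
        rw [Multiset.map_const', Multiset.prod_replicate, hcard]
      rw [h1]
      exact Multiset.prod_map_le_prod_map₀ _ _ (fun i _ => zero_le') hcon
    exact absurd (lt_of_le_of_lt hle hprodlt) (lt_irrefl _)
  obtain ⟨α, hαR, hαlt⟩ := hexα
  -- uniqueness of the close root
  have huniq : ∀ β ∈ R, w (φ x - β) < Δ → β = α := by
    intro β hβR hβlt
    by_contra hne
    have hpair : (α, β) ∈ P := by
      rw [hPdef, Finset.mem_filter, Finset.mem_product]
      exact ⟨⟨Multiset.mem_toFinset.mpr hαR, Multiset.mem_toFinset.mpr hβR⟩,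
        fun h => hne (h.symm)⟩
    have h1 : Δ ≤ w (α - β) := hΔle (α, β) hpair
    have h2 : w (α - β) < Δ := by
      have hab : α - β = (φ x - β) - (φ x - α) := by ring
      rw [hab]
      exact lt_of_le_of_lt (w.map_sub _ _) (max_lt hβlt hαlt)
    exact absurd (lt_of_le_of_lt h1 h2) (lt_irrefl _)
  -- `α` is fixed by every automorphism
  have hAroot : F.eval α = 0 := (mem_roots hF0).mp hαR
  have hfix : ∀ σ : L ≃ₐ[K] L, σ α = α := by
    intro σ
    have hσroot : σ α ∈ R := by
      rw [hRdef, mem_roots hF0]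
      show F.eval (σ α) = 0
      calc F.eval (σ α) = aeval (σ α) f := (hFeval _).symm
        _ = σ (aeval α f) := aeval_algHom_apply σ.toAlgHom α f
        _ = 0 := by rw [hFeval, hAroot, map_zero]
    have hσlt' : w (φ x - σ α) < Δ := by
      have hcomm : φ x - σ α = σ (φ x - α) := by
        rw [map_sub, AlgEquiv.commutes]
      rw [hcomm]
      rw [hΔdef, Finset.lt_inf'_iff]
      intro q hq
      -- pull back the pair `q` along `σ`
      have hmemQ : (σ.symm q.1, σ.symm q.2) ∈ P := by
        rw [hPdef, Finset.mem_filter, Finset.mem_product] at hq ⊢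
        obtain ⟨⟨h1, h2⟩, hne⟩ := hq
        refine ⟨⟨?_, ?_⟩, fun h => hne (by
          have h' := congrArg σ h
          simpa using h')⟩
        · rw [hSdef, Multiset.mem_toFinset] at h1 ⊢
          rw [hRdef, mem_roots hF0] at h1 ⊢
          show F.eval (σ.symm q.1) = 0
          calc F.eval (σ.symm q.1) = aeval (σ.symm q.1) f := (hFeval _).symm
            _ = σ.symm (aeval q.1 f) := aeval_algHom_apply σ.symm.toAlgHom q.1 f
            _ = 0 := by rw [hFeval, h1, map_zero]
        · rw [hSdef, Multiset.mem_toFinset] at h2 ⊢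
          rw [hRdef, mem_roots hF0] at h2 ⊢
          show F.eval (σ.symm q.2) = 0
          calc F.eval (σ.symm q.2) = aeval (σ.symm q.2) f := (hFeval _).symm
            _ = σ.symm (aeval q.2 f) := aeval_algHom_apply σ.symm.toAlgHom q.2 f
            _ = 0 := by rw [hFeval, h2, map_zero]
      have hlt1 : w (φ x - α) < w (σ.symm q.1 - σ.symm q.2) :=
        lt_of_lt_of_le hαlt (hΔle _ hmemQ)
      have h2 := (hσlt σ (φ x - α) (σ.symm q.1 - σ.symm q.2)).mpr hlt1
      simpa only [map_sub, AlgEquiv.apply_symm_apply] using h2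
    exact huniq (σ α) hσroot hσlt'
  -- conclude `α ∈ K`
  have haeval : aeval α f = 0 := by rw [hFeval, hAroot]
  have hsepα : IsSeparable K α := by
    have hdvd : minpoly K α ∣ f := minpoly.dvd K α haeval
    exact hsep.of_dvd hdvd
  have hbot : α ∈ (⊥ : Subalgebra K L) := by
    by_contra hmem
    rw [notMem_iff_exists_ne_and_isConjRoot hsepα (hnorm.splits α)] at hmem
    obtain ⟨y, hne, hconj⟩ := hmem
    obtain ⟨σ, hσy⟩ := hconj.symm.exists_algEquiv
    exact hne (hfix σ ▸ hσy)
  obtain ⟨x₀, hx₀⟩ := Algebra.mem_bot.mp hbot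
  refine ⟨x₀, ?_⟩
  apply φ.injective
  rw [map_zero, hφeval x₀]
  show F.eval (φ x₀) = 0
  rw [show φ x₀ = α from hx₀, hAroot]

end Aux

/-- Kaplansky–Krasner for `p`-henselian valuations: if a monic separable polynomial of
degree `> 1` splits in `K(p)` and takes values of arbitrarily high valuation
(in Mathlib's multiplicative convention: arbitrarily small non-zero values), then it
has a zero in `K`. -/
theorem kaplansky_krasner_pHenselian
    (p : ℕ) (hp : p.Prime) (K : Type*) [Field K] (O : ValuationSubring K)
    (hO : IsPHenselianV p O)
    (f : Polynomial K) (hmonic : f.Monic) (hsep : f.Separable)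
    (hdeg : 1 < f.natDegree)
    (hsplits : Splits (f.map (algebraMap K (MaxPExt p K))))
    (happrox : ∀ γ : O.ValueGroup, γ ≠ 0 → ∃ x : K, O.valuation (f.eval x) < γ) :
    ∃ x : K, f.eval x = 0 := by
  obtain ⟨O', hO'c, hO'u⟩ := hO
  haveI hnorm : Normal K (MaxPExt p K) := by
    haveI h : ∀ i : {M : IntermediateField K (AlgebraicClosure K) //
        FiniteDimensional K M ∧ IsGalois K M ∧ ∃ n : ℕ, Module.finrank K M = p ^ n},
        Normal K i.1 := fun i => i.2.2.1.to_normal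
    exact IntermediateField.normal_iSup (h := h)
  have hσO : ∀ σ : (MaxPExt p K) ≃ₐ[K] (MaxPExt p K),
      O'.comap (σ : MaxPExt p K →+* MaxPExt p K) = O' := by
    intro σ
    apply hO'u
    rw [ValuationSubring.comap_comap]
    have hcomp : (σ : MaxPExt p K →+* MaxPExt p K).comp (algebraMap K (MaxPExt p K)) =
        algebraMap K (MaxPExt p K) := by
      ext x; exact congrArg _ (σ.commutes x)
    rw [hcomp]
    exact hO'c
  exact krasner_core O O' hO'c hσO f hmonic hsep hdeg hsplits happrox
end
end

section
/- Let p be a prime and K a PAC field carrying a non-trivial p-henselian valuation. Then K has no Galois extension of p-power degree, i.e., K = K(p). -/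
noncomputable section

/-- A field `K` is pseudo-algebraically closed (PAC) if every absolutely irreducible
affine variety over `K` (given by an ideal whose extension to the algebraic closure is
prime) has a `K`-rational point. -/
def IsPAC (K : Type*) [Field K] : Prop :=
  ∀ (n : ℕ) (I : Ideal (MvPolynomial (Fin n) K)),
    (Ideal.map (MvPolynomial.map (algebraMap K (AlgebraicClosure K))) I).IsPrime →
    ∃ x : Fin n → K, ∀ f ∈ I, MvPolynomial.eval x f = 0

open Polynomial in
/-- The surface `g(X)·g(Y) = c²` is irreducible over any field, provided `g` is monic
of degree ≥ 2 with a simple root `r` (squarefreeness suffices), and `c ≠ 0`. -/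
lemma aux_bivar_irred {k : Type*} [Field k] (g : k[X]) (hm : g.Monic)
    (hdeg : 2 ≤ g.natDegree) (hsf : Squarefree g) {r : k} (hr : g.IsRoot r)
    {c : k} (hc : c ≠ 0) :
    Irreducible (g.map Polynomial.C * Polynomial.C g
      - Polynomial.C (Polynomial.C (c ^ 2)) : Polynomial (Polynomial k)) := by
  have hg0 : g ≠ 0 := hm.ne_zero
  set n := g.natDegree with hn
  set G : Polynomial (Polynomial k) :=
    g.map Polynomial.C * Polynomial.C g - Polynomial.C (Polynomial.C (c ^ 2)) with hG
  have hcoeff : ∀ i, i ≠ 0 → G.coeff i = Polynomial.C (g.coeff i) * g := by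
    intro i hi
    rw [hG, coeff_sub, coeff_mul_C, coeff_map, Polynomial.coeff_C, if_neg hi, sub_zero]
  have hcoeff0 : G.coeff 0 = Polynomial.C (g.coeff 0) * g - Polynomial.C (c ^ 2) := by
    rw [hG, coeff_sub, coeff_mul_C, coeff_map, Polynomial.coeff_C, if_pos rfl]
  have hGn : G.coeff n = g := by
    rw [hcoeff n (by omega), hm.coeff_natDegree, map_one, one_mul]
  have hG0 : G ≠ 0 := fun h => hg0 (by rw [← hGn, h, Polynomial.coeff_zero])
  have hdegG : G.natDegree = n := by
    refine le_antisymm (natDegree_le_iff_coeff_eq_zero.mpr fun N hN => ?_)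
      (le_natDegree_of_ne_zero (by rw [hGn]; exact hg0))
    rw [hcoeff N (by omega), coeff_eq_zero_of_natDegree_lt (by omega), map_zero, zero_mul]
  have hlc : G.leadingCoeff = g := by rw [leadingCoeff, hdegG, hGn]
  -- any degree-0 divisor is a unit
  have claim : ∀ P Q : Polynomial (Polynomial k), G = P * Q → P.natDegree = 0 → IsUnit P := by
    intro P Q hPQ hP0
    have hPC : P = Polynomial.C (P.coeff 0) := (eq_C_of_natDegree_eq_zero hP0)
    have hdvd : ∀ i, P.coeff 0 ∣ G.coeff i := by
      intro i
      have h : G.coeff i = P.coeff 0 * Q.coeff i := by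
        rw [hPQ]; conv_lhs => rw [hPC]
        rw [coeff_C_mul]
      rw [h]; exact dvd_mul_right _ _
    have h1 : P.coeff 0 ∣ g := by rw [← hGn]; exact hdvd n
    have h2 : P.coeff 0 ∣ Polynomial.C (c ^ 2) := by
      have := hdvd 0
      rw [hcoeff0] at this
      exact (dvd_sub_right (h1.mul_left _)).mp this
    have hu : IsUnit (P.coeff 0) :=
      isUnit_of_dvd_unit h2 (Polynomial.isUnit_C.mpr ((pow_ne_zero 2 hc).isUnit))
    rw [hPC]; exact Polynomial.isUnit_C.mpr hu
  constructor
  · intro h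
    have := Polynomial.natDegree_eq_zero_of_isUnit h
    omega
  intro P Q hPQ
  by_cases hP0 : P.natDegree = 0
  · exact Or.inl (claim P Q hPQ hP0)
  by_cases hQ0 : Q.natDegree = 0
  · exact Or.inr (claim Q P (by rw [hPQ, mul_comm]) hQ0)
  exfalso
  have hPne : P ≠ 0 := fun h => hG0 (by rw [hPQ, h, zero_mul])
  have hQne : Q ≠ 0 := fun h => hG0 (by rw [hPQ, h, mul_zero])
  have hsum : P.natDegree + Q.natDegree = n := by
    rw [← hdegG, hPQ, natDegree_mul hPne hQne]
  have hlcs : P.leadingCoeff * Q.leadingCoeff = g := by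
    rw [← hlc, hPQ, leadingCoeff_mul]
  -- evaluate the second variable at the root r
  set φ : Polynomial (Polynomial k) →+* Polynomial k :=
    Polynomial.mapRingHom (Polynomial.evalRingHom r) with hφ
  have hφC : ∀ u : Polynomial k, φ (Polynomial.C u) = Polynomial.C (u.eval r) := by
    intro u; simp [hφ]
  have hφG : φ G = -Polynomial.C (c ^ 2) := by
    rw [hG, map_sub, map_mul, hφC, hφC]
    have : φ (g.map Polynomial.C) = g := by
      rw [hφ, Polynomial.coe_mapRingHom, Polynomial.map_map]
      have : (Polynomial.evalRingHom r).comp Polynomial.C = RingHom.id k := by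
        ext x; simp
      rw [this, Polynomial.map_id]
    rw [this, hr.eq_zero, map_zero, mul_zero, zero_sub]
    simp
  have hφPQ : φ P * φ Q = -Polynomial.C (c ^ 2) := by rw [← map_mul, ← hPQ, hφG]
  have hne : (-Polynomial.C (c ^ 2) : Polynomial k) ≠ 0 := by
    simpa using pow_ne_zero 2 hc
  have hφPne : φ P ≠ 0 := fun h => hne (by rw [← hφPQ, h, zero_mul])
  have hφQne : φ Q ≠ 0 := fun h => hne (by rw [← hφPQ, h, mul_zero])
  have hdeg0 : (φ P).natDegree + (φ Q).natDegree = 0 := by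
    rw [← natDegree_mul hφPne hφQne, hφPQ]
    simp
  have hkey : ∀ (S : Polynomial (Polynomial k)), S ≠ 0 → (φ S).natDegree = 0 →
      S.natDegree ≠ 0 → (S.leadingCoeff).eval r = 0 := by
    intro S hSne hφS hSdeg
    have h1 : (φ S).coeff S.natDegree = (S.coeff S.natDegree).eval r := by
      simp [hφ]
    have h2 : (φ S).coeff S.natDegree = 0 :=
      coeff_eq_zero_of_natDegree_lt (by omega)
    rw [h2] at h1
    exact h1.symm
  have hPe : (P.leadingCoeff).eval r = 0 := hkey P hPne (by omega) hP0
  have hQe : (Q.leadingCoeff).eval r = 0 := hkey Q hQne (by omega) hQ0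
  have hdvdP : (Polynomial.X - Polynomial.C r) ∣ P.leadingCoeff := dvd_iff_isRoot.mpr hPe
  have hdvdQ : (Polynomial.X - Polynomial.C r) ∣ Q.leadingCoeff := dvd_iff_isRoot.mpr hQe
  have : (Polynomial.X - Polynomial.C r) * (Polynomial.X - Polynomial.C r) ∣ g := by
    rw [← hlcs]; exact mul_dvd_mul hdvdP hdvdQ
  exact Polynomial.not_isUnit_X_sub_C r (hsf _ this)


open Polynomial MvPolynomial in
/-- The ideal generated by `g(X₀)·g(X₁) - c²` in `k[X₀,X₁]` is prime. -/
lemma aux_span_prime {k : Type*} [Field k] (g : Polynomial k) (hm : g.Monic)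
    (hdeg : 2 ≤ g.natDegree) (hsf : Squarefree g) {r : k} (hr : g.IsRoot r)
    {c : k} (hc : c ≠ 0) :
    (Ideal.span {(Polynomial.eval₂ MvPolynomial.C (MvPolynomial.X 0) g *
        Polynomial.eval₂ MvPolynomial.C (MvPolynomial.X 1) g -
        MvPolynomial.C (c ^ 2) : MvPolynomial (Fin 2) k)}).IsPrime := by
  classical
  set F : MvPolynomial (Fin 2) k :=
    Polynomial.eval₂ MvPolynomial.C (MvPolynomial.X 0) g *
      Polynomial.eval₂ MvPolynomial.C (MvPolynomial.X 1) g - MvPolynomial.C (c ^ 2) with hF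
  set G : Polynomial (Polynomial k) :=
    g.map Polynomial.C * Polynomial.C g - Polynomial.C (Polynomial.C (c ^ 2)) with hG
  -- the isomorphism k[X₀,X₁] ≃ k[Y][X]
  set e : MvPolynomial (Fin 2) k ≃ₐ[k] Polynomial (Polynomial k) :=
    (MvPolynomial.finSuccEquiv k 1).trans
      (Polynomial.mapAlgEquiv ((MvPolynomial.finSuccEquiv k 0).trans
        (Polynomial.mapAlgEquiv (MvPolynomial.isEmptyAlgEquiv k (Fin 0))))) with he
  have heX0 : e (MvPolynomial.X 0) = Polynomial.X := by
    rw [he]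
    simp only [AlgEquiv.trans_apply, MvPolynomial.finSuccEquiv_X_zero,
      Polynomial.coe_mapAlgEquiv, Polynomial.map_X]
  have heX1 : e (MvPolynomial.X 1) = Polynomial.C Polynomial.X := by
    rw [he, show (1 : Fin 2) = Fin.succ 0 from rfl]
    simp only [AlgEquiv.trans_apply, MvPolynomial.finSuccEquiv_X_succ,
      Polynomial.coe_mapAlgEquiv, Polynomial.map_C]
    show Polynomial.C (((MvPolynomial.finSuccEquiv k 0).trans
        (Polynomial.mapAlgEquiv (MvPolynomial.isEmptyAlgEquiv k (Fin 0))))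
        (MvPolynomial.X 0)) = Polynomial.C Polynomial.X
    simp only [AlgEquiv.trans_apply, MvPolynomial.finSuccEquiv_X_zero,
      Polynomial.coe_mapAlgEquiv, Polynomial.map_X]
  have heC : ∀ x : k, e (MvPolynomial.C x) = Polynomial.C (Polynomial.C x) := by
    intro x
    have h0 : e (MvPolynomial.C x) = algebraMap k (Polynomial (Polynomial k)) x := by
      rw [← MvPolynomial.algebraMap_eq]; exact e.commutes x
    rw [h0, Polynomial.algebraMap_apply, Polynomial.algebraMap_apply]
    simp
  set eR : MvPolynomial (Fin 2) k →+* Polynomial (Polynomial k) := e.toAlgHom.toRingHom with heR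
  have eRapp : ∀ t, e t = eR t := fun _ => rfl
  have hcomp : eR.comp MvPolynomial.C =
      (Polynomial.C : Polynomial k →+* Polynomial (Polynomial k)).comp Polynomial.C :=
    RingHom.ext fun x => heC x
  have hfac1 : Polynomial.eval₂ ((Polynomial.C).comp (Polynomial.C : k →+* Polynomial k))
      Polynomial.X g = g.map Polynomial.C := by
    rw [← Polynomial.eval₂_map]; exact Polynomial.eval₂_C_X
  have hfac2 : Polynomial.eval₂ ((Polynomial.C).comp (Polynomial.C : k →+* Polynomial k))
      (Polynomial.C Polynomial.X) g = Polynomial.C g := by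
    have h := Polynomial.hom_eval₂ (p := g) (f := (Polynomial.C : k →+* Polynomial k))
      (g := (Polynomial.C : Polynomial k →+* Polynomial (Polynomial k))) Polynomial.X
    rw [Polynomial.eval₂_C_X] at h
    exact h.symm
  have heF : e F = G := by
    rw [hF, hG, map_sub, map_mul]
    congr 1
    · refine congrArg₂ (· * ·) ?_ ?_
      · rw [eRapp, Polynomial.hom_eval₂, hcomp, ← eRapp, heX0]; exact hfac1
      · rw [eRapp, Polynomial.hom_eval₂, hcomp, ← eRapp, heX1]; exact hfac2
    · exact heC _
  -- G is prime
  have hGirr : Irreducible G := aux_bivar_irred g hm hdeg hsf hr hc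
  have hGprime : Prime G := hGirr.prime
  have hG0 : G ≠ 0 := hGprime.ne_zero
  have hspan : (Ideal.span {G} : Ideal (Polynomial (Polynomial k))).IsPrime :=
    (Ideal.span_singleton_prime hG0).mpr hGprime
  have hFspan : (Ideal.span {F} : Ideal (MvPolynomial (Fin 2) k)) =
      Ideal.comap (e : MvPolynomial (Fin 2) k →+* Polynomial (Polynomial k))
        (Ideal.span {G}) := by
    ext x
    rw [Ideal.mem_comap, Ideal.mem_span_singleton, Ideal.mem_span_singleton]
    constructor
    · rintro ⟨d, rfl⟩
      refine ⟨e d, ?_⟩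
      show e (F * d) = G * e d
      rw [map_mul, heF]
    · rintro ⟨d, hd⟩
      refine ⟨e.symm d, e.injective ?_⟩
      rw [map_mul, heF, AlgEquiv.apply_symm_apply]
      exact hd
  rw [hFspan]
  exact hspan.comap _

section ValAux

variable {K M : Type*} [Field K] [Field M] [Algebra K M] [Normal K M]

open Polynomial

/-- If a valuation subring of a normal extension is invariant under all automorphisms, then
the ratio `σ u / u` is integral for every automorphism `σ`. -/
lemma aux_ratio_mem (R : ValuationSubring M)
    (hinv : ∀ (σ : M ≃ₐ[K] M) (b : M), b ∈ R ↔ σ b ∈ R)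
    (σ : M ≃ₐ[K] M) (u : M) (hu : u ≠ 0) : σ u / u ∈ R := by
  classical
  by_cases hq : σ u / u ∈ R
  · exact hq
  have ht : u / σ u ∈ R := by
    rcases R.mem_or_inv_mem (σ u / u) with h | h
    · exact absurd h hq
    · rwa [show (σ u / u)⁻¹ = u / σ u by rw [inv_div]] at h
  -- the orbit of `u` under `σ` is finite, since it consists of roots of the minimal polynomial
  have halg : IsIntegral K u := ‹Normal K M›.isIntegral u
  have hroot : ∀ i : ℕ, ((σ ^ i) u) ∈ ((minpoly K u).aroots M).toFinset := by
    intro i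
    rw [Multiset.mem_toFinset, Polynomial.mem_aroots]
    refine ⟨minpoly.ne_zero halg, ?_⟩
    rw [Polynomial.aeval_algHom_apply (σ ^ i : M ≃ₐ[K] M) u (minpoly K u)]
    rw [minpoly.aeval, map_zero]
  have hnotinj : ¬ Function.Injective (fun i : ℕ => (σ ^ i) u) := by
    intro hinj
    exact Set.infinite_of_injective_forall_mem hinj hroot (Finset.finite_toSet _)
  obtain ⟨i, j, heq, hne⟩ := Function.not_injective_iff.mp hnotinj
  have hmain : ∀ i j : ℕ, i < j → (σ ^ i) u = (σ ^ j) u → (σ ^ (j - i)) u = u := by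
    intro i j hlt heq
    have h1 : (σ ^ i) ((σ ^ (j - i)) u) = (σ ^ i) u := by
      rw [← AlgEquiv.mul_apply, ← pow_add, Nat.add_sub_cancel' (le_of_lt hlt)]
      exact heq.symm
    exact (σ ^ i).injective h1
  obtain ⟨m, hm1, hmu⟩ : ∃ m : ℕ, 1 ≤ m ∧ (σ ^ m) u = u := by
    rcases lt_or_gt_of_ne hne with h | h
    · exact ⟨j - i, by omega, hmain i j h heq⟩
    · exact ⟨i - j, by omega, hmain j i h heq.symm⟩
  have hσn0 : ∀ N : ℕ, (σ ^ N) u ≠ 0 := fun N h =>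
    hu ((map_eq_zero_iff (σ ^ N) (σ ^ N).injective).mp h)
  have htel : ∀ N : ℕ, (∏ i ∈ Finset.range N, ((σ ^ i) u / (σ ^ (i + 1)) u)) =
      u / ((σ ^ N) u) := by
    intro N
    induction N with
    | zero => simp [div_self hu]
    | succ n ih =>
        rw [Finset.prod_range_succ, ih, div_mul_div_cancel₀ (hσn0 n)]
  have hterms : ∀ i : ℕ, ((σ ^ i) u / (σ ^ (i + 1)) u) = (σ ^ i) (u / σ u) := by
    intro i
    rw [map_div₀]
    congr 1
  have hprod : (∏ i ∈ Finset.range m, (σ ^ i) (u / σ u)) = 1 := by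
    rw [← Finset.prod_congr rfl (fun i _ => (hterms i)), htel m, hmu, div_self hu]
  obtain ⟨m', rfl⟩ : ∃ m', m = m' + 1 := ⟨m - 1, by omega⟩
  rw [Finset.prod_range_succ'] at hprod
  have hrest : (∏ i ∈ Finset.range m', (σ ^ (i + 1)) (u / σ u)) ∈ R :=
    prod_mem fun i _ => (hinv (σ ^ (i + 1)) _).mp ht
  have h0 : (σ ^ (0 : ℕ)) (u / σ u) = u / σ u := by rw [pow_zero]; rfl
  rw [h0] at hprod
  have hq' : σ u / u = ∏ i ∈ Finset.range m', (σ ^ (i + 1)) (u / σ u) := by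
    have := eq_inv_of_mul_eq_one_left hprod
    rw [inv_div] at this
    exact this.symm
  rw [hq']
  exact hrest

/-- Invariance of the valuation under automorphisms. -/
lemma aux_val_eq (R : ValuationSubring M)
    (hinv : ∀ (σ : M ≃ₐ[K] M) (b : M), b ∈ R ↔ σ b ∈ R)
    (σ : M ≃ₐ[K] M) (u : M) : R.valuation (σ u) = R.valuation u := by
  by_cases hu : u = 0
  · rw [hu, map_zero, map_zero]
  have hσu : σ u ≠ 0 := fun h => hu ((map_eq_zero_iff σ σ.injective).mp h)
  have h1 : σ u / u ∈ R := aux_ratio_mem R hinv σ u hu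
  have h2 : u / σ u ∈ R := by
    have h := aux_ratio_mem R hinv σ.symm (σ u) hσu
    rwa [AlgEquiv.symm_apply_apply] at h
  apply le_antisymm
  · have h := (R.valuation_le_one_iff _).mpr h1
    rw [map_div₀] at h
    exact (div_le_one₀ (zero_lt_iff.mpr ((Valuation.ne_zero_iff _).mpr hu))).mp h
  · have h := (R.valuation_le_one_iff _).mpr h2
    rw [map_div₀] at h
    exact (div_le_one₀ (zero_lt_iff.mpr ((Valuation.ne_zero_iff _).mpr hσu))).mp h

end ValAux

open Polynomial in
/-- A PAC field carrying a non-trivial `p`-henselian valuation has `K = K(p)`. -/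
theorem pac_pHenselian_eq_maxPExt
    (p : ℕ) (hp : p.Prime) (K : Type*) [Field K]
    (hPAC : IsPAC K)
    (O : ValuationSubring K) (hnt : ∃ x : K, x ∉ O) (hO : IsPHenselianV p O) :
    MaxPExt p K = ⊥ := by
  classical
  by_contra hne
  -- the maximal p-extension is Galois over K
  haveI hinst : ∀ (i : {L : IntermediateField K (AlgebraicClosure K) //
      FiniteDimensional K L ∧ IsGalois K L ∧ ∃ n : ℕ, Module.finrank K L = p ^ n}),
      Normal K i.1 := fun i => i.2.2.1.to_normal
  haveI hinst2 : ∀ (i : {L : IntermediateField K (AlgebraicClosure K) //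
      FiniteDimensional K L ∧ IsGalois K L ∧ ∃ n : ℕ, Module.finrank K L = p ^ n}),
      Algebra.IsSeparable K i.1 := fun i => i.2.2.1.to_isSeparable
  haveI hnorm : Normal K (MaxPExt p K) :=
    IntermediateField.normal_iSup (F := K) (K := AlgebraicClosure K) _
  haveI hsepa : Algebra.IsSeparable K (MaxPExt p K) :=
    IntermediateField.isSeparable_iSup K (AlgebraicClosure K)
  -- an element not in the base field
  obtain ⟨a0, ha0M, ha0⟩ : ∃ a0 : AlgebraicClosure K, a0 ∈ MaxPExt p K ∧
      a0 ∉ (⊥ : IntermediateField K (AlgebraicClosure K)) := by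
    by_contra h
    push_neg at h
    exact hne (le_antisymm (fun x hx => h x hx) bot_le)
  set a : MaxPExt p K := ⟨a0, ha0M⟩ with ha
  have hanr : a ∉ (algebraMap K (MaxPExt p K)).range := by
    rintro ⟨y, hy⟩
    exact ha0 (IntermediateField.mem_bot.mpr ⟨y, congrArg Subtype.val hy⟩)
  have hint : IsIntegral K a := hnorm.isIntegral a
  set f : Polynomial K := minpoly K a with hf
  have hsep : f.Separable := Algebra.IsSeparable.isSeparable K a
  have hfm : f.Monic := minpoly.monic hint
  have hfdeg : 2 ≤ f.natDegree := (minpoly.two_le_natDegree_iff hint).mpr hanr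
  have hsplits : Splits (f.map (algebraMap K (MaxPExt p K))) := hnorm.splits a
  set n := f.natDegree with hn
  -- the valuation
  obtain ⟨O', hO'c, hO'u⟩ := hO
  have hinv : ∀ (σ : MaxPExt p K ≃ₐ[K] MaxPExt p K) (b : MaxPExt p K),
      b ∈ O' ↔ σ b ∈ O' := by
    intro σ b
    have h1 : (O'.comap σ.toAlgHom.toRingHom).comap (algebraMap K (MaxPExt p K)) = O := by
      rw [ValuationSubring.comap_comap]
      have : σ.toAlgHom.toRingHom.comp (algebraMap K (MaxPExt p K)) =
          algebraMap K (MaxPExt p K) := RingHom.ext fun x => σ.commutes x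
      rw [this, hO'c]
    have h2 : O'.comap σ.toAlgHom.toRingHom = O' := hO'u _ h1
    constructor
    · intro hb; rw [← h2] at hb; exact hb
    · intro hb; rw [← h2]; exact hb
  set w := O'.valuation with hw
  have hwσ : ∀ (σ : MaxPExt p K ≃ₐ[K] MaxPExt p K) (u : MaxPExt p K),
      w (σ u) = w u := fun σ u => aux_val_eq O' hinv σ u
  -- roots of f in M
  set fM := f.map (algebraMap K (MaxPExt p K)) with hfM
  have hfM0 : fM ≠ 0 := (Polynomial.map_ne_zero_iff (algebraMap K (MaxPExt p K)).injective).mpr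
    (minpoly.ne_zero hint)
  have hroots_card : Multiset.card fM.roots = n :=
    hsplits.natDegree_eq_card_roots.symm.trans (Polynomial.natDegree_map _)
  have haroot : a ∈ fM.roots := by
    rw [Polynomial.mem_roots hfM0, Polynomial.IsRoot, Polynomial.eval_map,
      ← Polynomial.aeval_def, minpoly.aeval]
  -- each root is conjugate to a, and conjugates have the same distances to base points
  have hconj : ∀ r ∈ fM.roots, ∃ σ : MaxPExt p K ≃ₐ[K] MaxPExt p K, σ r = a := by
    intro r hr
    apply minpoly.exists_algEquiv_of_root hint.isAlgebraic
    rw [Polynomial.mem_roots hfM0, Polynomial.IsRoot, Polynomial.eval_map] at hr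
    rw [← hf, Polynomial.aeval_def]
    exact hr
  have hrootval : ∀ (x : K), ∀ r ∈ fM.roots,
      w (algebraMap K (MaxPExt p K) x - r) = w (algebraMap K (MaxPExt p K) x - a) := by
    intro x r hr
    obtain ⟨σ, hσ⟩ := hconj r hr
    have h1 : σ (algebraMap K (MaxPExt p K) x - r) = algebraMap K (MaxPExt p K) x - a := by
      rw [map_sub, σ.commutes, hσ]
    rw [← h1, hwσ]
  -- a second root
  obtain ⟨rt, hrtmem, hrtne⟩ : ∃ rt ∈ fM.roots, rt ≠ a := by
    by_contra h
    push_neg at h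
    have hcount : fM.roots.count a = n := by
      rw [← hroots_card]
      exact Multiset.count_eq_card.mpr fun x hx => (h x hx).symm
    have hdvd : (Polynomial.X - Polynomial.C a) * (Polynomial.X - Polynomial.C a) ∣ fM := by
      have h1 : (Polynomial.X - Polynomial.C a) ^ Polynomial.rootMultiplicity a fM ∣ fM :=
        Polynomial.pow_rootMultiplicity_dvd fM a
      have h2 : Polynomial.rootMultiplicity a fM = n := by rw [← Polynomial.count_roots]; exact hcount
      calc (Polynomial.X - Polynomial.C a) * (Polynomial.X - Polynomial.C a)
          = (Polynomial.X - Polynomial.C a) ^ 2 := (sq _).symm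
        _ ∣ (Polynomial.X - Polynomial.C a) ^ Polynomial.rootMultiplicity a fM := by
            apply pow_dvd_pow; omega
        _ ∣ fM := h1
    exact Polynomial.not_isUnit_X_sub_C a ((Polynomial.Separable.map hsep).squarefree _ hdvd)
  set δ : MaxPExt p K := a - rt with hδ
  have hδ0 : δ ≠ 0 := sub_ne_zero.mpr (Ne.symm hrtne)
  have hwδ0 : w δ ≠ 0 := (Valuation.ne_zero_iff w).mpr hδ0
  -- the element s with 1 < w s
  obtain ⟨s, hs⟩ := hnt
  have hsO' : algebraMap K (MaxPExt p K) s ∉ O' := by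
    rw [← hO'c] at hs
    exact fun h => hs (ValuationSubring.mem_comap.mpr h)
  have hws : 1 < w (algebraMap K (MaxPExt p K) s) :=
    not_le.mp fun h => hsO' ((O'.valuation_le_one_iff _).mp h)
  have hs0 : s ≠ 0 := by rintro rfl; exact hs (zero_mem O)
  -- w of the image of the constant coefficient of the minpoly of δ
  have hδint : IsIntegral K δ := hnorm.isIntegral δ
  set e0 : K := (minpoly K δ).coeff 0 with he0
  have he0ne : e0 ≠ 0 := minpoly.coeff_zero_ne_zero hδint hδ0
  set d := (minpoly K δ).natDegree with hd
  have hd1 : 1 ≤ d := minpoly.natDegree_pos hδint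
  -- evaluation of mapped monic polynomials as products over roots
  have heval_prod : ∀ (q : Polynomial K), q.Monic → Splits (q.map (algebraMap K (MaxPExt p K))) →
      ∀ z : MaxPExt p K,
      (q.map (algebraMap K (MaxPExt p K))).eval z =
        (((q.map (algebraMap K (MaxPExt p K))).roots).map (fun r => z - r)).prod := by
    intro q hq hsp z
    conv_lhs => rw [hsp.eq_prod_roots_of_monic (hq.map _)]
    rw [Polynomial.eval_multiset_prod, Multiset.map_map]
    congr 1
    apply Multiset.map_congr rfl
    intro r _
    simp
  -- w(e0) = w(δ)^d
  have hwe0 : w (algebraMap K (MaxPExt p K) e0) = w δ ^ d := by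
    have hsplδ : Splits ((minpoly K δ).map (algebraMap K (MaxPExt p K))) := hnorm.splits δ
    set fδ := (minpoly K δ).map (algebraMap K (MaxPExt p K)) with hfδ
    have hfδ0 : fδ ≠ 0 := (Polynomial.map_ne_zero_iff
      (algebraMap K (MaxPExt p K)).injective).mpr (minpoly.ne_zero hδint)
    have h1 : algebraMap K (MaxPExt p K) e0 = fδ.eval 0 := by
      rw [he0, hfδ, ← Polynomial.coeff_map, Polynomial.coeff_zero_eq_eval_zero]
    have hrootw : ∀ r ∈ fδ.roots, w r = w δ := by
      intro r hr
      obtain ⟨σ, hσ⟩ : ∃ σ : MaxPExt p K ≃ₐ[K] MaxPExt p K, σ r = δ := by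
        apply minpoly.exists_algEquiv_of_root hδint.isAlgebraic
        rw [hfδ, Polynomial.mem_roots hfδ0, Polynomial.IsRoot, Polynomial.eval_map] at hr
        rw [Polynomial.aeval_def]
        exact hr
      rw [← hσ, hwσ]
    rw [h1, hfδ, heval_prod (minpoly K δ) (minpoly.monic hδint) hsplδ 0, ← hfδ]
    rw [map_multiset_prod w, Multiset.map_map]
    have h2 : (fδ.roots.map (w ∘ fun r => (0 : MaxPExt p K) - r)) =
        Multiset.replicate (Multiset.card fδ.roots) (w δ) := by
      apply Multiset.eq_replicate.mpr
      refine ⟨Multiset.card_map _ _, ?_⟩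
      intro b hb
      obtain ⟨r, hr, rfl⟩ := Multiset.mem_map.mp hb
      show w (0 - r) = w δ
      rw [zero_sub, Valuation.map_neg]
      exact hrootw r hr
    rw [h2, Multiset.prod_replicate]
    congr 1
    rw [hfδ]
    exact hsplδ.natDegree_eq_card_roots.symm.trans (Polynomial.natDegree_map _)
  -- w(f(x)) = w(x - a)^n for x in K
  have hevalw : ∀ x : K, w (algebraMap K (MaxPExt p K) (f.eval x)) =
      w (algebraMap K (MaxPExt p K) x - a) ^ n := by
    intro x
    set z := algebraMap K (MaxPExt p K) x with hz
    have h1 : algebraMap K (MaxPExt p K) (f.eval x) = fM.eval z := by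
      rw [hfM, Polynomial.eval_map, hz, Polynomial.eval₂_at_apply]
    rw [h1, hfM, heval_prod f hfm hsplits z, ← hfM]
    rw [map_multiset_prod w, Multiset.map_map]
    have h2 : (fM.roots.map (w ∘ fun r => z - r)) =
        Multiset.replicate (Multiset.card fM.roots) (w (z - a)) := by
      apply Multiset.eq_replicate.mpr
      refine ⟨Multiset.card_map _ _, ?_⟩
      intro b hb
      obtain ⟨r, hr, rfl⟩ := Multiset.mem_map.mp hb
      exact hrootval x r hr
    rw [h2, Multiset.prod_replicate, hroots_card]
  -- the distance from K to a is at least w δ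
  have hlow : ∀ x : K, w δ ≤ w (algebraMap K (MaxPExt p K) x - a) := by
    intro x
    set z := algebraMap K (MaxPExt p K) x with hz
    have h1 : w (z - rt) = w (z - a) := hrootval x rt hrtmem
    have h2 : w δ = w ((a - z) - (rt - z)) := by congr 1; ring
    rw [h2]
    calc w ((a - z) - (rt - z)) ≤ max (w (a - z)) (w (rt - z)) := w.map_sub _ _
      _ = w (z - a) := by rw [w.map_sub_swap a z, w.map_sub_swap rt z, h1, max_self]
  -- choose c small enough
  obtain ⟨c, hc0, hcw⟩ : ∃ c : K, c ≠ 0 ∧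
      w (algebraMap K (MaxPExt p K) c) < w δ ^ n := by
    have hn1 : 1 ≤ n := by omega
    by_cases hδ1 : w δ ≤ 1
    · refine ⟨e0 ^ (2 * n) * s⁻¹, mul_ne_zero (pow_ne_zero _ he0ne) (inv_ne_zero hs0), ?_⟩
      rw [map_mul, map_pow, map_inv₀, map_mul w, map_pow w, map_inv₀ w, hwe0]
      have h1 : (w δ ^ d) ^ (2 * n) ≤ w δ ^ n := by
        rw [← pow_mul]
        exact pow_le_pow_right_of_le_one' hδ1 (by nlinarith)
      have h2 : (w (algebraMap K (MaxPExt p K) s))⁻¹ < 1 := inv_lt_one_of_one_lt₀ hws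
      calc (w δ ^ d) ^ (2 * n) * (w (algebraMap K (MaxPExt p K) s))⁻¹
          < (w δ ^ d) ^ (2 * n) :=
            mul_lt_of_lt_one_right (zero_lt_iff.mpr (pow_ne_zero _ (pow_ne_zero _ hwδ0))) h2
        _ ≤ w δ ^ n := h1
    · refine ⟨s⁻¹, inv_ne_zero hs0, ?_⟩
      rw [map_inv₀, map_inv₀ w]
      calc (w (algebraMap K (MaxPExt p K) s))⁻¹ < 1 := inv_lt_one_of_one_lt₀ hws
        _ ≤ w δ ^ n := one_le_pow_of_one_le' (le_of_lt (not_le.mp hδ1)) n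
  -- master lemma: f(x)/c is never integral
  have hmaster : ∀ x : K, f.eval x / c ∉ O := by
    intro x hmem
    rw [← hO'c, ValuationSubring.mem_comap] at hmem
    have hle := (O'.valuation_le_one_iff _).mpr hmem
    rw [map_div₀, map_div₀, hevalw] at hle
    have hwc0 : (0 : _) < w (algebraMap K (MaxPExt p K) c) :=
      zero_lt_iff.mpr ((Valuation.ne_zero_iff w).mpr fun h =>
        hc0 ((map_eq_zero_iff _ (algebraMap K (MaxPExt p K)).injective).mp h))
    have h1 : w (algebraMap K (MaxPExt p K) x - a) ^ n ≤ w (algebraMap K (MaxPExt p K) c) :=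
      (div_le_one₀ hwc0).mp hle
    have h2 : w δ ^ n ≤ w (algebraMap K (MaxPExt p K) x - a) ^ n :=
      pow_le_pow_left' (hlow x) n
    exact absurd ((h2.trans h1)) (not_le.mpr hcw)
  -- PAC gives a point on the surface f(X₀)f(X₁) = c²
  have hfin : ∃ x0 x1 : K, f.eval x0 * f.eval x1 = c ^ 2 := by
    set g : Polynomial (AlgebraicClosure K) := f.map (algebraMap K (AlgebraicClosure K)) with hg
    have hgM : g.Monic := hfm.map _
    have hgdeg : 2 ≤ g.natDegree := by
      rw [hg, Polynomial.natDegree_map]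
      exact hfdeg
    have hgsf : Squarefree g := (Polynomial.Separable.map hsep).squarefree
    obtain ⟨r, hrr⟩ : ∃ r : AlgebraicClosure K, g.IsRoot r := by
      apply IsAlgClosed.exists_root g
      intro h
      rw [Polynomial.degree_eq_natDegree hgM.ne_zero] at h
      have h2 : g.natDegree = 0 := by exact_mod_cast h
      omega
    have hcA : algebraMap K (AlgebraicClosure K) c ≠ 0 := fun h =>
      hc0 ((map_eq_zero_iff _ (algebraMap K (AlgebraicClosure K)).injective).mp h)
    have hprime := aux_span_prime g hgM hgdeg hgsf hrr hcA
    set F : MvPolynomial (Fin 2) K :=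
      Polynomial.eval₂ MvPolynomial.C (MvPolynomial.X 0) f *
        Polynomial.eval₂ MvPolynomial.C (MvPolynomial.X 1) f - MvPolynomial.C (c ^ 2) with hF
    have hevmap : ∀ i : Fin 2, MvPolynomial.map (algebraMap K (AlgebraicClosure K))
        (Polynomial.eval₂ MvPolynomial.C (MvPolynomial.X i) f) =
        Polynomial.eval₂ MvPolynomial.C (MvPolynomial.X i) g := by
      intro i
      rw [Polynomial.hom_eval₂]
      have hc1 : (MvPolynomial.map (algebraMap K (AlgebraicClosure K))).comp
          (MvPolynomial.C : K →+* MvPolynomial (Fin 2) K) =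
          (MvPolynomial.C : AlgebraicClosure K →+* MvPolynomial (Fin 2) (AlgebraicClosure K)).comp
            (algebraMap K (AlgebraicClosure K)) :=
        RingHom.ext fun x => MvPolynomial.map_C _ x
      rw [hc1, MvPolynomial.map_X, hg, Polynomial.eval₂_map]
    have hmapF : MvPolynomial.map (algebraMap K (AlgebraicClosure K)) F =
        Polynomial.eval₂ MvPolynomial.C (MvPolynomial.X 0) g *
          Polynomial.eval₂ MvPolynomial.C (MvPolynomial.X 1) g -
          MvPolynomial.C ((algebraMap K (AlgebraicClosure K) c) ^ 2) := by
      rw [hF, map_sub, map_mul, hevmap 0, hevmap 1, MvPolynomial.map_C, map_pow]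
    have hIprime : (Ideal.map (MvPolynomial.map (algebraMap K (AlgebraicClosure K)))
        (Ideal.span {F})).IsPrime := by
      rw [Ideal.map_span, Set.image_singleton, hmapF]
      exact hprime
    obtain ⟨pt, hpt⟩ := hPAC 2 (Ideal.span {F}) hIprime
    have hF0 : MvPolynomial.eval pt F = 0 := hpt F (Ideal.subset_span rfl)
    refine ⟨pt 0, pt 1, ?_⟩
    have heval : ∀ i : Fin 2, MvPolynomial.eval pt
        (Polynomial.eval₂ MvPolynomial.C (MvPolynomial.X i) f) = f.eval (pt i) := by
      intro i
      rw [Polynomial.hom_eval₂]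
      have h1 : (MvPolynomial.eval pt).comp (MvPolynomial.C : K →+* MvPolynomial (Fin 2) K) =
          RingHom.id K := RingHom.ext fun x => MvPolynomial.eval_C x
      rw [h1, MvPolynomial.eval_X]
      rfl
    rw [hF, map_sub, map_mul, heval 0, heval 1, MvPolynomial.eval_C, sub_eq_zero] at hF0
    exact hF0
  obtain ⟨x0, x1, hx⟩ := hfin
  have h0 := hmaster x0
  have h1 := hmaster x1
  have hfx0 : f.eval x0 ≠ 0 := by
    intro h
    apply h0
    rw [h, zero_div]
    exact zero_mem O
  rcases O.mem_or_inv_mem (f.eval x0 / c) with h | h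
  · exact h0 h
  · apply h1
    have : (f.eval x0 / c)⁻¹ = f.eval x1 / c := by
      rw [inv_div, div_eq_div_iff hfx0 hc0, ← pow_two, ← hx]
      ring
    rwa [this] at h
end
end

section
/- Let p be a prime and (K,v) a valued field such that v is p-henselian. Then for every polynomial f ∈ O_v[X] which splits in K(p) and every a ∈ O_v whose residue is a simple root of the reduction of f (i.e., f̄(ā) = 0 and f̄'(ā) ≠ 0), there exists α ∈ O_v with f(α) = 0 and residue ā. -/
noncomputable section

open Polynomial

/-- Ultrametric bound for evaluations of `∏ (X - α)` and its derivative. -/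
lemma val_prod_bound {L Γ : Type*} [Field L] [LinearOrderedCommGroupWithZero Γ]
    (v : Valuation L Γ) (b : L) (hb : v b ≤ 1) (T : Multiset L) :
    v (((T.map fun α => X - C α).prod).eval b) ≤ (T.map fun α => max (v α) 1).prod ∧
    v ((((T.map fun α => X - C α).prod).derivative).eval b) ≤
      (T.map fun α => max (v α) 1).prod := by
  induction T using Multiset.induction_on with
  | empty => simp [zero_le']
  | cons a s ih =>
    obtain ⟨h1, h2⟩ := ih
    have hma : (1 : Γ) ≤ max (v a) 1 := le_max_right _ _
    have hba : v (b - a) ≤ max (v a) 1 := by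
      refine le_trans (v.map_sub b a) (max_le (le_trans hb hma) (le_max_left _ _))
    simp only [Multiset.map_cons, Multiset.prod_cons]
    constructor
    · rw [eval_mul, v.map_mul]
      exact mul_le_mul' (by simpa using hba) h1
    · rw [derivative_mul, derivative_sub, derivative_X, derivative_C, sub_zero, one_mul,
        eval_add, eval_mul]
      refine le_trans (v.map_add _ _) (max_le ?_ ?_)
      · exact le_trans h1 (le_mul_of_one_le_left' hma)
      · rw [v.map_mul]
        exact mul_le_mul' (by simpa using hba) h2

/-- Core valuation-theoretic Hensel lemma: a polynomial over the valuation ring which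
splits in `L` and has a "simple approximate root" `b` has a unique actual root near `b`. -/
lemma core_exists_unique {L : Type*} [Field L] (A : ValuationSubring L) (g : L[X])
    (hg : ∀ n, g.coeff n ∈ A) (hsplit : Splits g)
    (b : L) (hb : b ∈ A)
    (hroot : A.valuation (g.eval b) < 1)
    (hsimple : A.valuation (g.derivative.eval b) = 1) :
    ∃ x : L, g.eval x = 0 ∧ A.valuation (x - b) < 1 ∧
      ∀ y : L, g.eval y = 0 → A.valuation (y - b) < 1 → y = x := by
  classical
  have hb1 : A.valuation b ≤ 1 := (A.valuation_le_one_iff b).2 hb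
  set v := A.valuation with hv
  set T := g.roots with hTdef
  set c := g.leadingCoeff with hcdef
  have hfac : g = C c * (T.map fun a => X - C a).prod := hsplit.eq_prod_roots
  set P : L[X] := (T.map fun a => X - C a).prod with hPdef
  have hgb : g.eval b = c * P.eval b := by
    conv_lhs => rw [hfac]
    rw [eval_mul, eval_C]
  have hPb : P.eval b = (T.map fun α => b - α).prod := by
    rw [hPdef, eval_multiset_prod, Multiset.map_map]
    congr 1
    refine Multiset.map_congr rfl fun α _ => ?_
    simp
  have hgb' : g.derivative.eval b = c * P.derivative.eval b := by
    conv_lhs => rw [hfac]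
    rw [derivative_mul, derivative_C, zero_mul, zero_add, eval_mul, eval_C]
  -- existence
  have hex : ∃ x ∈ T, v (x - b) < 1 := by
    by_contra hcon
    push_neg at hcon
    have heq : ∀ α ∈ T, v (b - α) = max (v α) 1 := by
      intro α hα
      have h1 : (1 : _) ≤ v (b - α) := by
        have := hcon α hα
        rwa [← v.map_neg, neg_sub] at this
      rcases le_or_gt (v α) 1 with hle | hgt
      · have h2 : v (b - α) ≤ 1 := le_trans (v.map_sub b α) (max_le hb1 hle)
        rw [max_eq_right hle]
        exact le_antisymm h2 h1
      · rw [max_eq_left hgt.le]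
        have h2 : v (b - α) ≤ v α :=
          le_trans (v.map_sub b α) (by rw [max_eq_right (le_trans hb1 hgt.le)])
        refine le_antisymm h2 ?_
        have h3 : v α ≤ max (v b) (v (b - α)) := by
          have := v.map_sub b (b - α)
          rwa [sub_sub_cancel] at this
        rcases max_cases (v b) (v (b - α)) with ⟨he, _⟩ | ⟨he, _⟩
        · exact absurd ((h3.trans he.le).trans hb1) (not_le.2 hgt)
        · exact le_trans h3 he.le
    have hWeq : (T.map fun α => v (b - α)).prod = (T.map fun α => max (v α) 1).prod := by
      congr 1
      exact Multiset.map_congr rfl heq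
    have hgbv : v (g.eval b) = v c * (T.map fun α => max (v α) 1).prod := by
      rw [hgb, v.map_mul, hPb, map_multiset_prod, Multiset.map_map, ← hWeq]
      rfl
    have hder : (1 : A.ValueGroup) ≤ v c * (T.map fun α => max (v α) 1).prod := by
      refine le_of_eq_of_le hsimple.symm ?_
      rw [hgb', v.map_mul]
      exact mul_le_mul_right (val_prod_bound v b hb1 T).2 _
    rw [hgbv] at hroot
    exact absurd hroot (not_lt.2 hder)
  obtain ⟨x, hxT, hxb⟩ := hex
  have hx0 : g.eval x = 0 := isRoot_of_mem_roots hxT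
  refine ⟨x, hx0, hxb, ?_⟩
  intro y hy0 hyb
  by_contra hne
  have hmemnear : ∀ z : L, v (z - b) < 1 → z ∈ A := by
    intro z hz
    have h1 : v z ≤ 1 := by
      have h2 := v.map_add (z - b) b
      rw [sub_add_cancel] at h2
      exact le_trans h2 (max_le (le_of_lt hz) hb1)
    exact (A.valuation_le_one_iff z).1 h1
  have hyA : y ∈ A := hmemnear y hyb
  have hxA : x ∈ A := hmemnear x hxb
  have hvyb : v (b - y) < 1 := by rw [← v.map_neg, neg_sub]; exact hyb
  have hvxb : v (b - x) < 1 := by rw [← v.map_neg, neg_sub]; exact hxb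
  -- `(X - C y) * (X - C x)` divides `g`
  have hdvd : (X - C y) * (X - C x) ∣ g := by
    obtain ⟨g₁, hg₁⟩ := dvd_iff_isRoot.2 (show g.IsRoot y from hy0)
    have hx1 : g₁.IsRoot x := by
      have h3 : (x - y) * g₁.eval x = 0 := by
        rw [← hx0, hg₁, eval_mul, eval_sub, eval_X, eval_C]
      have h4 : x - y ≠ 0 := sub_ne_zero.2 fun h => hne (h ▸ rfl)
      exact (mul_eq_zero.1 h3).resolve_left h4
    obtain ⟨g₂, hg₂⟩ := dvd_iff_isRoot.2 hx1
    exact ⟨g₂, by rw [hg₁, hg₂, mul_assoc]⟩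
  -- lift `g` to the valuation subring
  set R := A.toSubring with hR
  have hcoeffs : ↑g.coeffs ⊆ (R : Set L) := by
    intro t ht
    obtain ⟨n, -, rfl⟩ := mem_coeffs_iff.1 ht
    exact hg n
  set gA : R[X] := g.toSubring R hcoeffs with hgA
  have hmapg : gA.map R.subtype = g := map_toSubring _ _ _
  have hinj : Function.Injective R.subtype := Subtype.coe_injective
  set yR : R := ⟨y, hyA⟩
  set xR : R := ⟨x, hxA⟩
  set bR : R := ⟨b, hb⟩
  set h : R[X] := (X - C yR) * (X - C xR) with hh
  have hmonic : h.Monic := (monic_X_sub_C _).mul (monic_X_sub_C _)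
  have hmaph : h.map R.subtype = (X - C y) * (X - C x) := by
    simp [hh, Polynomial.map_mul, Polynomial.map_sub, map_X, map_C]
    rfl
  have hmonicL : ((X - C y) * (X - C x)).Monic := (monic_X_sub_C _).mul (monic_X_sub_C _)
  have hmod : gA %ₘ h = 0 := by
    have h1 : (gA %ₘ h).map R.subtype = g %ₘ ((X - C y) * (X - C x)) := by
      rw [map_modByMonic R.subtype hmonic, hmapg, hmaph]
    have h2 : g %ₘ ((X - C y) * (X - C x)) = 0 :=
      (modByMonic_eq_zero_iff_dvd hmonicL).2 hdvd
    exact (Polynomial.map_eq_zero_iff hinj).1 (h1.trans h2)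
  have hfacA : gA = h * (gA /ₘ h) := by
    conv_lhs => rw [← modByMonic_add_div gA h]
    rw [hmod, zero_add]
  set q : R[X] := gA /ₘ h with hqdef
  set qL : L[X] := q.map R.subtype with hqL
  have hfacL : g = (X - C y) * (X - C x) * qL := by
    rw [← hmapg, hfacA, Polynomial.map_mul, hmaph]
  have hq1 : v (qL.eval b) ≤ 1 := by
    have h5 : qL.eval b = R.subtype (q.eval bR) := by
      rw [hqL, eval_map]
      exact eval₂_at_apply R.subtype bR
    rw [h5]
    exact (A.valuation_le_one_iff _).2 (q.eval bR).2
  have hq2 : v (qL.derivative.eval b) ≤ 1 := by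
    have h5 : qL.derivative.eval b = R.subtype (q.derivative.eval bR) := by
      rw [hqL, derivative_map, eval_map]
      exact eval₂_at_apply R.subtype bR
    rw [h5]
    exact (A.valuation_le_one_iff _).2 (q.derivative.eval bR).2
  have hder : g.derivative.eval b
      = ((b - x) + (b - y)) * qL.eval b + (b - y) * (b - x) * qL.derivative.eval b := by
    rw [hfacL]
    simp only [derivative_mul, derivative_X_sub_C, eval_add, eval_mul, eval_sub, eval_X,
      eval_C, one_mul, mul_one]
  have hlt : v (g.derivative.eval b) < 1 := by
    rw [hder]
    refine lt_of_le_of_lt (v.map_add _ _) (max_lt ?_ ?_)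
    · rw [v.map_mul]
      refine lt_of_le_of_lt (mul_le_of_le_one_right' hq1) ?_
      exact lt_of_le_of_lt (v.map_add _ _) (max_lt hvxb hvyb)
    · rw [v.map_mul, v.map_mul]
      refine lt_of_le_of_lt (mul_le_of_le_one_right' hq2) ?_
      exact lt_of_le_of_lt (mul_le_of_le_one_right' hvxb.le) hvyb
  rw [hsimple] at hlt
  exact lt_irrefl _ hlt

/-- Units of a valuation subring are elements whose inverse also lies in the subring. -/
lemma vsr_isUnit_iff {K : Type*} [Field K] (O : ValuationSubring K) (x : O) :
    IsUnit x ↔ (x : K) ≠ 0 ∧ (x : K)⁻¹ ∈ O := by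
  constructor
  · intro hx
    obtain ⟨y, hy⟩ := isUnit_iff_exists_inv.1 hx
    have hy' : (x : K) * (y : K) = 1 := by exact_mod_cast congrArg Subtype.val hy
    have hx0 : (x : K) ≠ 0 := by
      intro h0
      rw [h0, zero_mul] at hy'
      exact zero_ne_one hy'
    have : (x : K)⁻¹ = (y : K) := inv_eq_of_mul_eq_one_right hy'
    exact ⟨hx0, this ▸ y.2⟩
  · rintro ⟨hx0, hinv⟩
    exact isUnit_iff_exists_inv.2 ⟨⟨(x : K)⁻¹, hinv⟩, Subtype.ext (mul_inv_cancel₀ hx0)⟩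

/-- Transfer of maximal-ideal membership along an embedding compatible with
valuation subrings. -/
lemma vsr_maximalIdeal_transfer {K L : Type*} [Field K] [Field L] (j : K →+* L)
    (O : ValuationSubring K) (A : ValuationSubring L)
    (hmem : ∀ t : K, t ∈ O ↔ j t ∈ A) (x : O) :
    x ∈ IsLocalRing.maximalIdeal O ↔ A.valuation (j ↑x) < 1 := by
  have hjx : j ↑x ∈ A := (hmem ↑x).1 x.2
  have h1 : x ∈ IsLocalRing.maximalIdeal O ↔ ¬IsUnit x := by
    rw [IsLocalRing.mem_maximalIdeal, mem_nonunits_iff]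
  have h2 : A.valuation (j ↑x) < 1 ↔ ¬IsUnit (⟨j ↑x, hjx⟩ : A) := by
    have h2' := A.valuation_lt_one_iff ⟨j ↑x, hjx⟩
    rw [IsLocalRing.mem_maximalIdeal, mem_nonunits_iff] at h2'
    exact h2'.symm
  rw [h1, h2]
  have h3 : IsUnit x ↔ IsUnit (⟨j ↑x, hjx⟩ : A) := by
    rw [vsr_isUnit_iff, vsr_isUnit_iff]
    show ((x : K) ≠ 0 ∧ (x : K)⁻¹ ∈ O) ↔ (j ↑x ≠ 0 ∧ (j ↑x)⁻¹ ∈ A)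
    constructor
    · rintro ⟨h0, hi⟩
      exact ⟨fun hc => h0 (j.injective (by rw [hc, map_zero])), by
        rw [← map_inv₀]; exact (hmem _).1 hi⟩
    · rintro ⟨h0, hi⟩
      refine ⟨fun hc => h0 (by rw [hc, map_zero]), ?_⟩
      rw [← map_inv₀] at hi
      exact (hmem _).2 hi
  rw [h3]

/-- In a normal separable extension, an element fixed by every automorphism lies in the
base field. -/
lemma fixed_mem_range {K L : Type*} [Field K] [Field L] [Algebra K L]
    [Normal K L] [Algebra.IsSeparable K L] (x : L)
    (hx : ∀ σ : L ≃ₐ[K] L, σ x = x) : ∃ β : K, algebraMap K L β = x := by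
  classical
  have hint : IsIntegral K x := Normal.isIntegral ‹Normal K L› x
  have halg : IsAlgebraic K x := hint.isAlgebraic
  have hroots : ∀ y : L, (Polynomial.aeval y) (minpoly K x) = 0 → y = x := by
    intro y hy
    obtain ⟨σ, hσ⟩ := minpoly.exists_algEquiv_of_root halg hy
    exact σ.injective (by rw [hσ, hx σ])
  have hsplit : Splits ((minpoly K x).map (algebraMap K L)) := Normal.splits ‹_› x
  have hsep : (minpoly K x).Separable := Algebra.IsSeparable.isSeparable K x
  have hmne : minpoly K x ≠ 0 := minpoly.ne_zero hint
  have hcard : ((minpoly K x).map (algebraMap K L)).roots.card = (minpoly K x).natDegree :=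
    by rw [← hsplit.natDegree_eq_card_roots, natDegree_map]
  have hnodup : ((minpoly K x).map (algebraMap K L)).roots.Nodup := nodup_roots hsep.map
  have hmapne : (minpoly K x).map (algebraMap K L) ≠ 0 :=
    (Polynomial.map_ne_zero_iff (algebraMap K L).injective).2 hmne
  have hallx : ∀ y ∈ ((minpoly K x).map (algebraMap K L)).roots, y = x := by
    intro y hy
    have h1 : ((minpoly K x).map (algebraMap K L)).eval y = 0 := (mem_roots hmapne).1 hy
    rw [eval_map, ← aeval_def] at h1
    exact hroots y h1
  have hle : ((minpoly K x).map (algebraMap K L)).roots.card ≤ 1 := by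
    rw [← Multiset.toFinset_card_of_nodup hnodup]
    refine Finset.card_le_one.2 fun s hs t ht => ?_
    rw [Multiset.mem_toFinset] at hs ht
    rw [hallx s hs, hallx t ht]
  have hdeg : (minpoly K x).natDegree = 1 := by
    have hpos : 0 < (minpoly K x).natDegree := minpoly.natDegree_pos hint
    omega
  have : x ∈ (algebraMap K L).range := by
    rw [← minpoly.degree_eq_one_iff]
    rw [degree_eq_natDegree hmne, hdeg]
    rfl
  obtain ⟨β, hβ⟩ := RingHom.mem_range.1 this
  exact ⟨β, hβ⟩

set_option maxHeartbeats 1600000 in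
/-- Hensel's lemma for `p`-henselian valuations: simple residue roots of polynomials over
`O_v` which split in `K(p)` lift to roots in `O_v`. -/
theorem pHenselian_lift_simple_root
    (p : ℕ) (hp : p.Prime) (K : Type*) [Field K] (O : ValuationSubring K)
    (hO : IsPHenselianV p O)
    (f : Polynomial O)
    (hsplits : Splits ((f.map (algebraMap O K)).map (algebraMap K (MaxPExt p K))))
    (a : O)
    (hroot : (f.map (IsLocalRing.residue O)).eval (IsLocalRing.residue O a) = 0)
    (hsimple : (f.map (IsLocalRing.residue O)).derivative.eval
      (IsLocalRing.residue O a) ≠ 0) :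
    ∃ α : O, f.eval α = 0 ∧ IsLocalRing.residue O α = IsLocalRing.residue O a := by
  classical
  obtain ⟨O', hO', huni⟩ := hO
  set ι : K →+* (MaxPExt p K) := (algebraMap K (MaxPExt p K) : K →+* (MaxPExt p K)) with hι
  -- membership transfer between `O` and `O'`
  have hmem : ∀ t : K, t ∈ O ↔ ι t ∈ O' := by
    intro t
    conv_lhs => rw [← hO']
    exact ValuationSubring.mem_comap
  -- Galois invariance of `O'`
  have hσmem : ∀ (σ : (MaxPExt p K) ≃ₐ[K] (MaxPExt p K)) (z : MaxPExt p K),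
      z ∈ O' ↔ σ z ∈ O' := by
    intro σ z
    have h1 : (O'.comap (σ : (MaxPExt p K) →+* (MaxPExt p K))).comap ι = O := by
      ext t
      rw [ValuationSubring.mem_comap, ValuationSubring.mem_comap]
      change σ (ι t) ∈ O' ↔ t ∈ O
      rw [show σ (ι t) = ι t from σ.commutes t]
      exact (hmem t).symm
    have h2 := huni _ h1
    have h3 := ValuationSubring.mem_comap
      (A := O') (f := (σ : (MaxPExt p K) →+* (MaxPExt p K))) (x := z)
    rw [h2] at h3
    exact h3
  -- the polynomial over `L = K(p)`
  set g : (MaxPExt p K)[X] := (f.map (algebraMap O K)).map ι with hg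
  set b : MaxPExt p K := ι (algebraMap O K a) with hbdef
  have hbO' : b ∈ O' := (hmem _).1 a.2
  have hcoeff : ∀ n, g.coeff n ∈ O' := by
    intro n
    rw [hg, coeff_map]
    refine (hmem _).1 ?_
    rw [coeff_map]
    exact (f.coeff n).2
  have hsplit' : Splits g := hsplits
  -- evaluation transfer lemmas
  have hevalL : ∀ (P : Polynomial O) (t : O),
      ((P.map (algebraMap O K)).map ι).eval (ι (algebraMap O K t))
        = ι (algebraMap O K (P.eval t)) := by
    intro P t
    rw [eval_map, eval₂_at_apply, eval_map, eval₂_at_apply]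
  have hres : ∀ (P : Polynomial O) (t : O),
      (P.map (IsLocalRing.residue O)).eval (IsLocalRing.residue O t)
        = IsLocalRing.residue O (P.eval t) := by
    intro P t
    rw [eval_map, eval₂_at_apply]
  -- root and simpleness in terms of the maximal ideal of `O`
  have hrootm : f.eval a ∈ IsLocalRing.maximalIdeal O := by
    rw [hres f a] at hroot
    exact Ideal.Quotient.eq_zero_iff_mem.1 hroot
  have hsimplem : f.derivative.eval a ∉ IsLocalRing.maximalIdeal O := by
    intro hc
    apply hsimple
    rw [derivative_map, hres (derivative f) a]
    exact Ideal.Quotient.eq_zero_iff_mem.2 hc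
  -- bridge between `maximalIdeal O` and the valuation of `O'`
  have hbridge : ∀ t : O,
      t ∈ IsLocalRing.maximalIdeal O ↔ O'.valuation (ι (algebraMap O K t)) < 1 := by
    intro t
    exact vsr_maximalIdeal_transfer ι O O' hmem t
  have hrootv : O'.valuation (g.eval b) < 1 := by
    rw [hg, hbdef, hevalL f a]
    exact (hbridge (f.eval a)).1 hrootm
  have hgder : g.derivative = (f.derivative.map (algebraMap O K)).map ι := by
    rw [hg, derivative_map, derivative_map]
  have hsimplev : O'.valuation (g.derivative.eval b) = 1 := by
    rw [hgder, hbdef, hevalL (derivative f) a]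
    refine le_antisymm ((O'.valuation_le_one_iff _).2 ((hmem _).1 (f.derivative.eval a).2)) ?_
    rw [← not_lt]
    intro hc
    exact hsimplem ((hbridge (f.derivative.eval a)).2 hc)
  -- apply the core Hensel lemma over `L`
  obtain ⟨x, hx0, hxb, hxuniq⟩ :=
    core_exists_unique O' g hcoeff hsplit' b hbO' hrootv hsimplev
  -- Galois setup
  haveI hnormals : ∀ (i : {L : IntermediateField K (AlgebraicClosure K) //
      FiniteDimensional K L ∧ IsGalois K L ∧ ∃ n : ℕ, Module.finrank K L = p ^ n}),
      Normal K i.1 := fun i => i.2.2.1.to_normal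
  haveI hseps : ∀ (i : {L : IntermediateField K (AlgebraicClosure K) //
      FiniteDimensional K L ∧ IsGalois K L ∧ ∃ n : ℕ, Module.finrank K L = p ^ n}),
      Algebra.IsSeparable K i.1 := fun i => i.2.2.1.to_isSeparable
  haveI hnor : Normal K (MaxPExt p K) := by
    show Normal K (⨆ L : {L : IntermediateField K (AlgebraicClosure K) //
      FiniteDimensional K L ∧ IsGalois K L ∧ ∃ n : ℕ, Module.finrank K L = p ^ n}, L.1 :
        IntermediateField K (AlgebraicClosure K))
    infer_instance
  haveI hsep : Algebra.IsSeparable K (MaxPExt p K) := by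
    show Algebra.IsSeparable K (⨆ L : {L : IntermediateField K (AlgebraicClosure K) //
      FiniteDimensional K L ∧ IsGalois K L ∧ ∃ n : ℕ, Module.finrank K L = p ^ n}, L.1 :
        IntermediateField K (AlgebraicClosure K))
    infer_instance
  -- every automorphism fixes `x`
  have hfix : ∀ σ : (MaxPExt p K) ≃ₐ[K] (MaxPExt p K), σ x = x := by
    intro σ
    refine hxuniq (σ x) ?_ ?_
    · have h1 : g.eval (σ x) = σ (g.eval x) := by
        have e1 : ∀ w : MaxPExt p K, g.eval w = Polynomial.aeval w (f.map (algebraMap O K)) := by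
          intro w
          rw [hg, eval_map]
          exact (aeval_def w _).symm
        rw [e1, e1]
        exact aeval_algHom_apply σ.toAlgHom x _
      rw [h1, hx0, map_zero]
    · have hσb : σ b = b := σ.commutes (algebraMap O K a)
      have h2 : σ x - b = σ (x - b) := by rw [map_sub, hσb]
      rw [h2]
      have hxbA : x - b ∈ O' := O'.mem_of_valuation_le_one _ hxb.le
      have h3 := vsr_maximalIdeal_transfer (σ : (MaxPExt p K) →+* (MaxPExt p K)) O' O'
        (fun t => hσmem σ t) (⟨x - b, hxbA⟩ : O')
      have h4 := O'.valuation_lt_one_iff (⟨x - b, hxbA⟩ : O')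
      exact h3.1 (h4.2 hxb)
  -- descend to `K`
  obtain ⟨β, hβ⟩ := fixed_mem_range x hfix
  have hxO' : x ∈ O' := by
    have hxe : x = (x - b) + b := by ring
    rw [hxe]
    exact O'.add_mem _ _ (O'.mem_of_valuation_le_one _ hxb.le) hbO'
  have hβO : β ∈ O := by
    refine (hmem β).2 ?_
    rw [show ι β = x from hβ]
    exact hxO'
  refine ⟨⟨β, hβO⟩, ?_, ?_⟩
  · have h5 : ι (algebraMap O K (f.eval ⟨β, hβO⟩)) = 0 := by
      rw [← hevalL f ⟨β, hβO⟩]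
      show g.eval (ι β) = 0
      rw [show ι β = x from hβ, hx0]
    have h6 : algebraMap O K (f.eval ⟨β, hβO⟩) = 0 := by
      apply ι.injective
      rw [h5, map_zero]
    exact Subtype.ext (by simpa using h6)
  · have h8 : ι (algebraMap O K ((⟨β, hβO⟩ : O) - a)) = x - b := by
      rw [map_sub, map_sub, hbdef]
      congr 1
    have h7 : (⟨β, hβO⟩ : O) - a ∈ IsLocalRing.maximalIdeal O := by
      rw [hbridge, h8]
      exact hxb
    exact Ideal.Quotient.eq.2 h7
end
end
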